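/- arXiv:2010.12919 — 6 statements merged into one kernel-verified Lean document; each statement's English description precedes it below -/
import Mathlib

section
/- Let μ be a probability measure on a finite type Ω. Let W : Ω → 𝒲 and U : Ω → 𝒰 (with 𝒲, 𝒰 finite types) be independent random variables under μ, let τ : 𝒲 → Bool, f : 𝒲 → 𝒵 (𝒵 a finite type), and g : Bool × 𝒵 × 𝒰 → ℝ, and define Y : Ω → ℝ by Y(ω) = g(τ(W ω), f(W ω), U ω). Assume overlap: for every z with μ(f ∘ W = z) > 0, both μ({τ ∘ W = true} ∩ {f ∘ W = z}) > 0 and μ({τ ∘ W = false} ∩ {f ∘ W = z}) > 0. Then the interventional average treatment effect E_μ[g(true, f(W(·)), U(·))] − E_μ[g(false, f(W(·)), U(·))] equals the backdoor adjustment formula ∑_{z : μ(f∘W=z)>0} μ(f ∘ W = z) · ( E[Y | τ∘W = true, f∘W = z] − E[Y | τ∘W = false, f∘W = z] ). -/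
open MeasureTheory
open scoped Classical

/-- Conditional expectation `E[Y | A] = (∑_{ω ∈ A} μ{ω} · Y ω) / μ(A)` on a finite
probability space. -/
noncomputable def cexp {Ω : Type*} [Fintype Ω] [MeasurableSpace Ω]
    (μ : Measure Ω) (Y : Ω → ℝ) (A : Set Ω) : ℝ :=
  (∑ ω : Ω, A.indicator (fun ω => (μ {ω}).toReal * Y ω) ω) / (μ A).toReal

private lemma meas_toReal_eq_sum' {Ω : Type*} [Fintype Ω] [MeasurableSpace Ω]
    [MeasurableSingletonClass Ω] (μ : Measure Ω) [IsFiniteMeasure μ] (S : Set Ω) :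
    (μ S).toReal = ∑ ω ∈ Finset.univ.filter (· ∈ S), (μ {ω}).toReal := by
  classical
  have key : μ S = ∑ ω ∈ Finset.univ.filter (· ∈ S), μ {ω} := by
    conv_lhs => rw [show S = ⋃ ω ∈ Finset.univ.filter (· ∈ S), ({ω} : Set Ω) by
      ext x; simp]
    exact measure_biUnion_finset
      (fun a _ b _ hab => by simpa [Function.onFun, Set.disjoint_singleton] using hab)
      (fun b _ => measurableSet_singleton b)
  rw [key, ENNReal.toReal_sum (fun a _ => measure_ne_top μ _)]

private lemma sum_fiber_pair' {Ω 𝒲 𝒰 : Type*} [Fintype Ω] [Fintype 𝒲] [Fintype 𝒰]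
    (p : Ω → ℝ) (W : Ω → 𝒲) (U : Ω → 𝒰) (h : 𝒲 → 𝒰 → ℝ) :
    ∑ ω : Ω, p ω * h (W ω) (U ω) =
      ∑ w : 𝒲, ∑ u : 𝒰,
        (∑ ω ∈ Finset.univ.filter (fun ω => W ω = w ∧ U ω = u), p ω) * h w u := by
  classical
  rw [← Finset.sum_fiberwise Finset.univ (fun ω => (W ω, U ω))
      (fun ω => p ω * h (W ω) (U ω)), Fintype.sum_prod_type]
  refine Finset.sum_congr rfl fun w _ => Finset.sum_congr rfl fun u _ => ?_
  rw [Finset.sum_mul]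
  refine Finset.sum_congr ?_ fun ω hω => ?_
  · ext ω; simp [Prod.ext_iff]
  · simp only [Finset.mem_filter] at hω
    rw [hω.2.1, hω.2.2]

/-- Theorem 1 (identification): under independence of the exogenous noise `U` from the
text `W`, the structural outcome `Y = g(τ(W), f(W), U)`, and overlap, the interventional
ATE equals the backdoor adjustment over `Z̃ = f(W)`. -/
theorem ate_identification
    {Ω 𝒲 𝒰 𝒵 : Type*} [Fintype Ω] [Fintype 𝒲] [Fintype 𝒰] [Fintype 𝒵]
    [MeasurableSpace Ω] [MeasurableSingletonClass Ω]
    (μ : Measure Ω) [IsProbabilityMeasure μ]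
    (W : Ω → 𝒲) (U : Ω → 𝒰) (τ : 𝒲 → Bool) (f : 𝒲 → 𝒵) (g : Bool × 𝒵 × 𝒰 → ℝ)
    (Y : Ω → ℝ) (hY : ∀ ω, Y ω = g (τ (W ω), f (W ω), U ω))
    (hindep : ∀ (w : 𝒲) (u : 𝒰),
      μ ({ω | W ω = w} ∩ {ω | U ω = u}) = μ {ω | W ω = w} * μ {ω | U ω = u})
    (hoverlap : ∀ z : 𝒵, 0 < μ {ω | f (W ω) = z} →
      0 < μ ({ω | τ (W ω) = true} ∩ {ω | f (W ω) = z}) ∧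
      0 < μ ({ω | τ (W ω) = false} ∩ {ω | f (W ω) = z})) :
    (∑ ω : Ω, (μ {ω}).toReal * g (true, f (W ω), U ω)) -
      (∑ ω : Ω, (μ {ω}).toReal * g (false, f (W ω), U ω)) =
    ∑ z ∈ Finset.univ.filter (fun z : 𝒵 => 0 < μ {ω | f (W ω) = z}),
      (μ {ω | f (W ω) = z}).toReal *
        (cexp μ Y ({ω | τ (W ω) = true} ∩ {ω | f (W ω) = z}) -
          cexp μ Y ({ω | τ (W ω) = false} ∩ {ω | f (W ω) = z})) := by
  classical
  have hP : ∀ S : Set Ω,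
      (μ S).toReal = ∑ ω ∈ Finset.univ.filter (· ∈ S), (μ {ω}).toReal :=
    fun S => meas_toReal_eq_sum' μ S
  -- singleton-level independence, sum form
  have hm : ∀ (w : 𝒲) (u : 𝒰),
      (∑ ω ∈ Finset.univ.filter (fun ω => W ω = w ∧ U ω = u), (μ {ω}).toReal)
        = (μ {ω | W ω = w}).toReal * (μ {ω | U ω = u}).toReal := by
    intro w u
    have h2 : (μ ({ω | W ω = w} ∩ {ω | U ω = u})).toReal
        = (μ {ω | W ω = w}).toReal * (μ {ω | U ω = u}).toReal := by
      rw [hindep w u, ENNReal.toReal_mul]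
    rw [← h2, hP]
    refine Finset.sum_congr ?_ fun _ _ => rfl
    ext ω
    simp [Set.mem_setOf_eq]
  -- workhorse
  have main : ∀ h : 𝒲 → 𝒰 → ℝ,
      ∑ ω : Ω, (μ {ω}).toReal * h (W ω) (U ω)
        = ∑ w : 𝒲, ∑ u : 𝒰,
            (μ {ω | W ω = w}).toReal * (μ {ω | U ω = u}).toReal * h w u := by
    intro h
    rw [sum_fiber_pair' (fun ω => (μ {ω}).toReal) W U h]
    exact Finset.sum_congr rfl fun w _ => Finset.sum_congr rfl fun u _ => by
      rw [hm w u]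
  -- marginal of W-events
  have hPW : ∀ (φ : 𝒲 → Prop) (_ : DecidablePred φ),
      (μ {ω | φ (W ω)}).toReal
        = ∑ w : 𝒲, if φ w then (μ {ω | W ω = w}).toReal else 0 := by
    intro φ _
    rw [hP, ← Finset.sum_fiberwise _ W
      (fun ω => (μ {ω}).toReal)]
    refine Finset.sum_congr rfl fun w _ => ?_
    by_cases hw : φ w
    · rw [if_pos hw, hP]
      refine Finset.sum_congr ?_ fun _ _ => rfl
      ext ω
      simp only [Finset.mem_filter, Finset.mem_univ, true_and, Set.mem_setOf_eq]
      exact ⟨fun h => h.2, fun h => ⟨h ▸ hw, h⟩⟩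
    · rw [if_neg hw]
      refine Finset.sum_eq_zero fun ω hω => ?_
      simp only [Finset.mem_filter, Finset.mem_univ, true_and, Set.mem_setOf_eq] at hω
      exact absurd (hω.2 ▸ hω.1) hw
  -- conditional expectations
  have hcexp : ∀ (t : Bool) (z : 𝒵),
      0 < μ ({ω | τ (W ω) = t} ∩ {ω | f (W ω) = z}) →
      cexp μ Y ({ω | τ (W ω) = t} ∩ {ω | f (W ω) = z})
        = ∑ u : 𝒰, (μ {ω | U ω = u}).toReal * g (t, z, u) := by
    intro t z hpos
    set A : Set Ω := {ω | τ (W ω) = t} ∩ {ω | f (W ω) = z} with hA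
    have hAset : A = {ω | τ (W ω) = t ∧ f (W ω) = z} := rfl
    have hD : (μ A).toReal ≠ 0 := by
      rw [ENNReal.toReal_ne_zero]
      exact ⟨hpos.ne', measure_ne_top μ A⟩
    have hmeasA : (μ A).toReal
        = ∑ w : 𝒲, if τ w = t ∧ f w = z then (μ {ω | W ω = w}).toReal else 0 := by
      rw [hAset]; exact hPW (fun w => τ w = t ∧ f w = z) inferInstance
    have hnum : (∑ ω : Ω, A.indicator (fun ω => (μ {ω}).toReal * Y ω) ω)
        = (μ A).toReal * ∑ u : 𝒰, (μ {ω | U ω = u}).toReal * g (t, z, u) := by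
      have e1 : ∀ ω : Ω, A.indicator (fun ω => (μ {ω}).toReal * Y ω) ω
          = (μ {ω}).toReal *
            (if τ (W ω) = t ∧ f (W ω) = z then g (t, z, U ω) else 0) := by
        intro ω
        by_cases hω : ω ∈ A
        · rw [Set.indicator_of_mem hω]
          have h1 : τ (W ω) = t := hω.1
          have h2 : f (W ω) = z := hω.2
          simp [h1, h2, hY ω]
        · rw [Set.indicator_of_notMem hω]
          have hcond : ¬(τ (W ω) = t ∧ f (W ω) = z) := hω
          simp [hcond]
      calc (∑ ω : Ω, A.indicator (fun ω => (μ {ω}).toReal * Y ω) ω)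
          = ∑ ω : Ω, (μ {ω}).toReal *
              (fun w u => if τ w = t ∧ f w = z then g (t, z, u) else 0) (W ω) (U ω) :=
            Finset.sum_congr rfl fun ω _ => e1 ω
        _ = ∑ w : 𝒲, ∑ u : 𝒰, (μ {ω | W ω = w}).toReal * (μ {ω | U ω = u}).toReal *
              (if τ w = t ∧ f w = z then g (t, z, u) else 0) :=
            main (fun w u => if τ w = t ∧ f w = z then g (t, z, u) else 0)
        _ = ∑ w : 𝒲, (if τ w = t ∧ f w = z then (μ {ω | W ω = w}).toReal else 0) *
              ∑ u : 𝒰, (μ {ω | U ω = u}).toReal * g (t, z, u) := by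
            refine Finset.sum_congr rfl fun w _ => ?_
            by_cases hw : τ w = t ∧ f w = z
            · simp only [hw, if_true, and_self, Finset.mul_sum]
              exact Finset.sum_congr rfl fun u _ => by ring
            · simp [hw]
        _ = (μ A).toReal * ∑ u : 𝒰, (μ {ω | U ω = u}).toReal * g (t, z, u) := by
            rw [← Finset.sum_mul, ← hmeasA]
    show (∑ ω : Ω, A.indicator (fun ω => (μ {ω}).toReal * Y ω) ω) / (μ A).toReal = _
    rw [hnum, mul_comm, mul_div_assoc, div_self hD, mul_one]
  -- LHS per treatment
  have hLHS : ∀ t : Bool,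
      (∑ ω : Ω, (μ {ω}).toReal * g (t, f (W ω), U ω))
        = ∑ z : 𝒵, (μ {ω | f (W ω) = z}).toReal *
            ∑ u : 𝒰, (μ {ω | U ω = u}).toReal * g (t, z, u) := by
    intro t
    calc (∑ ω : Ω, (μ {ω}).toReal * g (t, f (W ω), U ω))
        = ∑ ω : Ω, (μ {ω}).toReal *
            (fun w u => g (t, f w, u)) (W ω) (U ω) := rfl
      _ = ∑ w : 𝒲, ∑ u : 𝒰, (μ {ω | W ω = w}).toReal * (μ {ω | U ω = u}).toReal *
            g (t, f w, u) := main (fun w u => g (t, f w, u))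
      _ = ∑ w : 𝒲, (μ {ω | W ω = w}).toReal *
            ∑ u : 𝒰, (μ {ω | U ω = u}).toReal * g (t, f w, u) := by
          refine Finset.sum_congr rfl fun w _ => ?_
          rw [Finset.mul_sum]
          exact Finset.sum_congr rfl fun u _ => by ring
      _ = ∑ z : 𝒵, ∑ w ∈ Finset.univ.filter (fun w => f w = z),
            (μ {ω | W ω = w}).toReal *
            ∑ u : 𝒰, (μ {ω | U ω = u}).toReal * g (t, f w, u) :=
          (Finset.sum_fiberwise Finset.univ f _).symm
      _ = ∑ z : 𝒵, (μ {ω | f (W ω) = z}).toReal *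
            ∑ u : 𝒰, (μ {ω | U ω = u}).toReal * g (t, z, u) := by
          refine Finset.sum_congr rfl fun z _ => ?_
          rw [hPW (fun w => f w = z) inferInstance, ← Finset.sum_filter, Finset.sum_mul]
          refine Finset.sum_congr rfl fun w hw => ?_
          simp only [Finset.mem_filter] at hw
          rw [hw.2]
  rw [hLHS true, hLHS false, ← Finset.sum_sub_distrib]
  rw [← Finset.sum_filter_add_sum_filter_not Finset.univ
    (fun z : 𝒵 => 0 < μ {ω | f (W ω) = z})]
  have hzero : ∑ z ∈ Finset.univ.filter (fun z : 𝒵 => ¬ 0 < μ {ω | f (W ω) = z}),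
      ((μ {ω | f (W ω) = z}).toReal *
          ∑ u : 𝒰, (μ {ω | U ω = u}).toReal * g (true, z, u) -
        (μ {ω | f (W ω) = z}).toReal *
          ∑ u : 𝒰, (μ {ω | U ω = u}).toReal * g (false, z, u)) = 0 := by
    refine Finset.sum_eq_zero fun z hz => ?_
    simp only [Finset.mem_filter, Finset.mem_univ, true_and, pos_iff_ne_zero,
      not_not] at hz
    simp [hz]
  rw [hzero, add_zero]
  refine Finset.sum_congr rfl fun z hz => ?_
  simp only [Finset.mem_filter, Finset.mem_univ, true_and] at hz
  rw [hcexp true z (hoverlap z hz).1, hcexp false z (hoverlap z hz).2]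
  ring
end

section
/- Let μ be a probability measure on a finite type Ω, W : Ω → 𝒲 (𝒲 finite), τ : 𝒲 → Bool, f : 𝒲 → 𝒵 (𝒵 finite), and Y : Ω → ℝ. Suppose there is q : Bool × 𝒵 → ℝ with E[Y | W = w] = q(τ(w), f(w)) for every w with μ(W = w) > 0, and assume overlap: for every z with μ(f∘W = z) > 0, both μ({τ∘W = true} ∩ {f∘W = z}) > 0 and μ({τ∘W = false} ∩ {f∘W = z}) > 0. Then ∑_{w : μ(W=w)>0} μ(W = w) · ( q(true, f(w)) − q(false, f(w)) ) = ∑_{z : μ(f∘W=z)>0} μ(f∘W = z) · ( E[Y | τ∘W = true, f∘W = z] − E[Y | τ∘W = false, f∘W = z] ). -/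
open MeasureTheory
open scoped Classical

section Aux

variable {Ω : Type*} [Fintype Ω] [MeasurableSpace Ω] [MeasurableSingletonClass Ω]

lemma measure_toReal_eq_sum_indicator (μ : Measure Ω) [IsFiniteMeasure μ] (A : Set Ω) :
    (μ A).toReal = ∑ ω : Ω, A.indicator (fun ω => (μ {ω}).toReal) ω := by
  have h := MeasureTheory.Measure.tsum_indicator_apply_singleton μ A
    (MeasurableSet.of_discrete)
  rw [tsum_fintype] at h
  rw [← h, ENNReal.toReal_sum]
  · refine Fintype.sum_congr _ _ fun ω => ?_
    by_cases hω : ω ∈ A <;> simp [Set.indicator_apply, hω]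
  · intro ω _
    by_cases hω : ω ∈ A <;> simp [Set.indicator_apply, hω, measure_ne_top]

lemma sum_indicator_comp {𝒲 : Type*} [Fintype 𝒲]
    (W : Ω → 𝒲) (P : 𝒲 → Prop) (g : Ω → ℝ) :
    ∑ ω : Ω, ({ω | P (W ω)}).indicator g ω
      = ∑ w ∈ Finset.univ.filter P, ∑ ω : Ω, ({ω | W ω = w}).indicator g ω := by
  rw [Finset.sum_filter]
  have hpush : ∀ w : 𝒲, (if P w then ∑ ω : Ω, ({ω | W ω = w}).indicator g ω else 0)
      = ∑ ω : Ω, (if P w then ({ω | W ω = w}).indicator g ω else 0) := fun w => by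
    split <;> simp
  simp_rw [hpush]
  rw [Finset.sum_comm]
  refine Fintype.sum_congr _ _ fun ω => ?_
  by_cases hP : P (W ω)
  · rw [Finset.sum_eq_single (W ω)]
    · simp [Set.indicator_apply, hP]
    · intro w _ hw
      have : ¬ (W ω = w) := fun h => hw h.symm
      simp [this]
    · simp
  · simp only [Set.indicator_apply]
    rw [Finset.sum_eq_zero]
    · simp [hP]
    · intro w _
      by_cases hw : W ω = w
      · subst hw; simp [hP]
      · simp [hw]

/-- Numerator of `cexp` over a fiber of `W`. -/
lemma fiber_num (μ : Measure Ω) [IsFiniteMeasure μ] {𝒲 : Type*} (W : Ω → 𝒲) (Y : Ω → ℝ)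
    (c : ℝ) (w : 𝒲) (hc : 0 < μ {ω | W ω = w} → cexp μ Y {ω | W ω = w} = c) :
    ∑ ω : Ω, ({ω | W ω = w}).indicator (fun ω => (μ {ω}).toReal * Y ω) ω
      = c * (μ {ω | W ω = w}).toReal := by
  by_cases hpos : 0 < μ {ω | W ω = w}
  · have hne : (μ {ω | W ω = w}).toReal ≠ 0 := by
      simp [ENNReal.toReal_eq_zero_iff, hpos.ne', measure_ne_top]
    have := hc hpos
    rw [cexp, div_eq_iff hne] at this
    rw [this]
  · have h0 : μ {ω | W ω = w} = 0 := by
      simpa [pos_iff_ne_zero] using hpos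
    rw [Finset.sum_eq_zero, h0]
    · simp
    · intro ω _
      by_cases hω : ω ∈ {ω | W ω = w}
      · have : μ {ω} = 0 :=
          measure_mono_null (Set.singleton_subset_iff.mpr hω) h0
        simp [Set.indicator_apply, hω, this]
      · simp [Set.indicator_apply, hω]

/-- `cexp` over a union of fibers on which the fiberwise conditional expectations are
all equal to `c` is itself `c`. -/
lemma cexp_comp_const (μ : Measure Ω) [IsFiniteMeasure μ] {𝒲 : Type*} [Fintype 𝒲]
    (W : Ω → 𝒲) (Y : Ω → ℝ) (P : 𝒲 → Prop) (c : ℝ)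
    (hc : ∀ w, P w → 0 < μ {ω | W ω = w} → cexp μ Y {ω | W ω = w} = c)
    (hpos : 0 < μ {ω | P (W ω)}) :
    cexp μ Y {ω | P (W ω)} = c := by
  have hne : (μ {ω | P (W ω)}).toReal ≠ 0 := by
    simp [ENNReal.toReal_eq_zero_iff, hpos.ne', measure_ne_top]
  have hnum : ∑ ω : Ω, ({ω | P (W ω)}).indicator (fun ω => (μ {ω}).toReal * Y ω) ω
      = c * (μ {ω | P (W ω)}).toReal := by
    rw [sum_indicator_comp W P, measure_toReal_eq_sum_indicator μ, sum_indicator_comp W P,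
      Finset.mul_sum]
    refine Finset.sum_congr rfl fun w hw => ?_
    rw [fiber_num μ W Y c w (hc w (Finset.mem_filter.mp hw).2),
      measure_toReal_eq_sum_indicator μ]
  rw [cexp, hnum, mul_div_assoc, div_self hne, mul_one]

end Aux

/-- Used in the proof of Theorem 1: the backdoor adjustment formula averaged over
texts `W` coincides with the stratified (over values of `Z̃ = f(W)`) difference of
conditional expectations, where `T̃ = τ(W)` is the perceived treatment. -/
theorem backdoor_average_eq_stratified
    {Ω 𝒲 𝒵 : Type*} [Fintype Ω] [Fintype 𝒲] [Fintype 𝒵]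
    [MeasurableSpace Ω] [MeasurableSingletonClass Ω]
    (μ : Measure Ω) [IsProbabilityMeasure μ]
    (W : Ω → 𝒲) (τ : 𝒲 → Bool) (f : 𝒲 → 𝒵) (Y : Ω → ℝ)
    (q : Bool × 𝒵 → ℝ)
    (hq : ∀ w : 𝒲, 0 < μ {ω | W ω = w} →
      cexp μ Y {ω | W ω = w} = q (τ w, f w))
    (hoverlap : ∀ z : 𝒵, 0 < μ {ω | f (W ω) = z} →
      0 < μ ({ω | τ (W ω) = true} ∩ {ω | f (W ω) = z}) ∧
      0 < μ ({ω | τ (W ω) = false} ∩ {ω | f (W ω) = z})) :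
    ∑ w ∈ Finset.univ.filter (fun w : 𝒲 => 0 < μ {ω | W ω = w}),
      (μ {ω | W ω = w}).toReal * (q (true, f w) - q (false, f w)) =
    ∑ z ∈ Finset.univ.filter (fun z : 𝒵 => 0 < μ {ω | f (W ω) = z}),
      (μ {ω | f (W ω) = z}).toReal *
        (cexp μ Y ({ω | τ (W ω) = true} ∩ {ω | f (W ω) = z}) -
          cexp μ Y ({ω | τ (W ω) = false} ∩ {ω | f (W ω) = z})) := by
  -- For each stratum with positive mass, the two conditional expectations equal q.
  have hset : ∀ (t : Bool) (z : 𝒵),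
      {ω | τ (W ω) = t} ∩ {ω | f (W ω) = z} = {ω | τ (W ω) = t ∧ f (W ω) = z} := by
    intro t z; ext ω; simp [Set.mem_inter_iff]
  have hcexp : ∀ (t : Bool) (z : 𝒵), 0 < μ {ω | f (W ω) = z} →
      cexp μ Y ({ω | τ (W ω) = t} ∩ {ω | f (W ω) = z}) = q (t, z) := by
    intro t z hz
    have hpos : 0 < μ ({ω | τ (W ω) = t} ∩ {ω | f (W ω) = z}) := by
      cases t
      · exact (hoverlap z hz).2
      · exact (hoverlap z hz).1
    rw [hset t z] at hpos ⊢
    exact cexp_comp_const μ W Y (fun w => τ w = t ∧ f w = z) (q (t, z))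
      (fun w hw hwpos => by rw [hq w hwpos, hw.1, hw.2]) hpos
  -- measure of an f∘W-stratum as a sum over fibers of W
  have hmz : ∀ z : 𝒵, (μ {ω | f (W ω) = z}).toReal
      = ∑ w ∈ Finset.univ.filter (fun w => f w = z), (μ {ω | W ω = w}).toReal := by
    intro z
    rw [measure_toReal_eq_sum_indicator μ, sum_indicator_comp W (fun w => f w = z)]
    exact Finset.sum_congr rfl fun w _ => (measure_toReal_eq_sum_indicator μ _).symm
  -- Remove the positivity filters: excluded terms vanish.
  have hL : ∑ w ∈ Finset.univ.filter (fun w : 𝒲 => 0 < μ {ω | W ω = w}),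
        (μ {ω | W ω = w}).toReal * (q (true, f w) - q (false, f w))
      = ∑ w : 𝒲, (μ {ω | W ω = w}).toReal * (q (true, f w) - q (false, f w)) := by
    refine Finset.sum_filter_of_ne fun w _ hw => ?_
    rw [pos_iff_ne_zero]
    intro h0
    exact hw (by simp [h0])
  rw [hL]
  have hR : ∑ z ∈ Finset.univ.filter (fun z : 𝒵 => 0 < μ {ω | f (W ω) = z}),
        (μ {ω | f (W ω) = z}).toReal *
          (cexp μ Y ({ω | τ (W ω) = true} ∩ {ω | f (W ω) = z}) -
            cexp μ Y ({ω | τ (W ω) = false} ∩ {ω | f (W ω) = z}))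
      = ∑ z ∈ Finset.univ.filter (fun z : 𝒵 => 0 < μ {ω | f (W ω) = z}),
          (μ {ω | f (W ω) = z}).toReal * (q (true, z) - q (false, z)) := by
    refine Finset.sum_congr rfl fun z hz => ?_
    have hzpos := (Finset.mem_filter.mp hz).2
    rw [hcexp true z hzpos, hcexp false z hzpos]
  rw [hR]
  have hR2 : ∑ z ∈ Finset.univ.filter (fun z : 𝒵 => 0 < μ {ω | f (W ω) = z}),
        (μ {ω | f (W ω) = z}).toReal * (q (true, z) - q (false, z))
      = ∑ z : 𝒵, (μ {ω | f (W ω) = z}).toReal * (q (true, z) - q (false, z)) := by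
    refine Finset.sum_filter_of_ne fun z _ hz => ?_
    rw [pos_iff_ne_zero]
    intro h0
    exact hz (by simp [h0])
  rw [hR2]
  -- Group the left-hand sum by the value of f.
  rw [← Finset.sum_fiberwise Finset.univ f
    (fun w => (μ {ω | W ω = w}).toReal * (q (true, f w) - q (false, f w)))]
  refine Finset.sum_congr rfl fun z _ => ?_
  rw [hmz z, Finset.sum_mul]
  refine Finset.sum_congr rfl fun w hw => ?_
  rw [(Finset.mem_filter.mp hw).2]
end

section
/- Let μ be a probability measure on a finite type Ω, Y : Ω → ℝ, and let T, T̂ ⊆ Ω be events such that the four events T ∩ T̂, T ∩ T̂ᶜ, Tᶜ ∩ T̂, Tᶜ ∩ T̂ᶜ all have positive μ-measure. Assume conditional independence of Y and T̂ given T: E[Y | T ∩ T̂] = E[Y | T ∩ T̂ᶜ] = E[Y | T] and E[Y | Tᶜ ∩ T̂] = E[Y | Tᶜ ∩ T̂ᶜ] = E[Y | Tᶜ]. Let ε₀ := P(Tᶜ | T̂) and ε₁ := P(T | T̂ᶜ). Then E[Y | T̂] − E[Y | T̂ᶜ] = ( E[Y | T] − E[Y | Tᶜ] ) · ( 1 −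 (ε₀ + ε₁) ). -/
open MeasureTheory
open scoped Classical

lemma sum_split' {Ω : Type*} [Fintype Ω] (f : Ω → ℝ) (T A : Set Ω) :
    ∑ ω : Ω, A.indicator f ω =
      (∑ ω : Ω, (T ∩ A).indicator f ω) + ∑ ω : Ω, (Tᶜ ∩ A).indicator f ω := by
  rw [← Finset.sum_add_distrib]
  apply Finset.sum_congr rfl
  intro ω _
  by_cases hT : ω ∈ T <;> by_cases hA : ω ∈ A <;> simp [Set.indicator, hT, hA]

lemma meas_split {Ω : Type*} [Fintype Ω] [MeasurableSpace Ω] [MeasurableSingletonClass Ω]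
    (μ : Measure Ω) [IsProbabilityMeasure μ] (T A : Set Ω) :
    (μ A).toReal = (μ (T ∩ A)).toReal + (μ (Tᶜ ∩ A)).toReal := by
  have hT : MeasurableSet T := (Set.toFinite T).measurableSet
  have h := measure_inter_add_diff (μ := μ) A hT
  have hd : A \ T = Tᶜ ∩ A := by ext; simp [Set.mem_diff]; tauto
  rw [hd, Set.inter_comm A T] at h
  rw [← ENNReal.toReal_add (measure_ne_top μ _) (measure_ne_top μ _), h]

/-- Conditional probability `P(B | A) = μ(A ∩ B) / μ(A)`. -/
noncomputable def cprob {Ω : Type*} [MeasurableSpace Ω]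
    (μ : Measure Ω) (A B : Set Ω) : ℝ :=
  (μ (A ∩ B)).toReal / (μ A).toReal

lemma cexp_sum_eq {Ω : Type*} [Fintype Ω] [MeasurableSpace Ω]
    (μ : Measure Ω) (Y : Ω → ℝ) (A : Set Ω) (h : (0:ℝ) < (μ A).toReal) :
    ∑ ω : Ω, A.indicator (fun ω => (μ {ω}).toReal * Y ω) ω
      = cexp μ Y A * (μ A).toReal := by
  rw [cexp, div_mul_cancel₀]
  exact h.ne'

/-- Per-stratum form of Theorem 2: substituting the proxy `T̂` for the true treatment
`T` attenuates the contrast by the factor `1 − (ε₀ + ε₁)`, where `ε₀ = P(Tᶜ | T̂)`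
and `ε₁ = P(T | T̂ᶜ)`. -/
theorem attenuation_per_stratum
    {Ω : Type*} [Fintype Ω]
    [MeasurableSpace Ω] [MeasurableSingletonClass Ω]
    (μ : Measure Ω) [IsProbabilityMeasure μ]
    (Y : Ω → ℝ) (T That : Set Ω)
    (h11 : 0 < μ (T ∩ That))
    (h10 : 0 < μ (T ∩ Thatᶜ))
    (h01 : 0 < μ (Tᶜ ∩ That))
    (h00 : 0 < μ (Tᶜ ∩ Thatᶜ))
    (hCI1 : cexp μ Y (T ∩ That) = cexp μ Y (T ∩ Thatᶜ) ∧
      cexp μ Y (T ∩ Thatᶜ) = cexp μ Y T)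
    (hCI0 : cexp μ Y (Tᶜ ∩ That) = cexp μ Y (Tᶜ ∩ Thatᶜ) ∧
      cexp μ Y (Tᶜ ∩ Thatᶜ) = cexp μ Y Tᶜ)
    (ε₀ ε₁ : ℝ) (hε₀ : ε₀ = cprob μ That Tᶜ) (hε₁ : ε₁ = cprob μ Thatᶜ T) :
    cexp μ Y That - cexp μ Y Thatᶜ =
      (cexp μ Y T - cexp μ Y Tᶜ) * (1 - (ε₀ + ε₁)) := by
  obtain ⟨h1a, h1b⟩ := hCI1
  obtain ⟨h0a, h0b⟩ := hCI0
  have hp11 : (0:ℝ) < (μ (T ∩ That)).toReal :=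
    ENNReal.toReal_pos h11.ne' (measure_ne_top μ _)
  have hp10 : (0:ℝ) < (μ (T ∩ Thatᶜ)).toReal :=
    ENNReal.toReal_pos h10.ne' (measure_ne_top μ _)
  have hp01 : (0:ℝ) < (μ (Tᶜ ∩ That)).toReal :=
    ENNReal.toReal_pos h01.ne' (measure_ne_top μ _)
  have hp00 : (0:ℝ) < (μ (Tᶜ ∩ Thatᶜ)).toReal :=
    ENNReal.toReal_pos h00.ne' (measure_ne_top μ _)
  set a := cexp μ Y T with ha
  set b := cexp μ Y Tᶜ with hb
  have hS11 := cexp_sum_eq μ Y (T ∩ That) hp11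
  have hS10 := cexp_sum_eq μ Y (T ∩ Thatᶜ) hp10
  have hS01 := cexp_sum_eq μ Y (Tᶜ ∩ That) hp01
  have hS00 := cexp_sum_eq μ Y (Tᶜ ∩ Thatᶜ) hp00
  rw [h1a.trans h1b] at hS11
  rw [h1b] at hS10
  rw [h0a.trans h0b] at hS01
  rw [h0b] at hS00
  have e1 : cexp μ Y That =
      (a * (μ (T ∩ That)).toReal + b * (μ (Tᶜ ∩ That)).toReal) /
        ((μ (T ∩ That)).toReal + (μ (Tᶜ ∩ That)).toReal) := by
    rw [cexp, sum_split' _ T That, hS11, hS01, meas_split μ T That]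
  have e2 : cexp μ Y Thatᶜ =
      (a * (μ (T ∩ Thatᶜ)).toReal + b * (μ (Tᶜ ∩ Thatᶜ)).toReal) /
        ((μ (T ∩ Thatᶜ)).toReal + (μ (Tᶜ ∩ Thatᶜ)).toReal) := by
    rw [cexp, sum_split' _ T Thatᶜ, hS10, hS00, meas_split μ T Thatᶜ]
  have hd1 : (0:ℝ) < (μ (T ∩ That)).toReal + (μ (Tᶜ ∩ That)).toReal := by linarith
  have hd0 : (0:ℝ) < (μ (T ∩ Thatᶜ)).toReal + (μ (Tᶜ ∩ Thatᶜ)).toReal := by linarith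
  rw [e1, e2, hε₀, hε₁, cprob, cprob, Set.inter_comm That Tᶜ, Set.inter_comm Thatᶜ T,
    meas_split μ T That, meas_split μ T Thatᶜ]
  field_simp
  ring
end

section
/- Let μ be a probability measure on a finite type Ω, Y : Ω → ℝ, Z̃ : Ω → 𝒵 (𝒵 finite), and let T, T̂ ⊆ Ω be events. Suppose for every z with μ(Z̃ = z) > 0 the four events {Z̃=z} ∩ T ∩ T̂, {Z̃=z} ∩ T ∩ T̂ᶜ, {Z̃=z} ∩ Tᶜ ∩ T̂, {Z̃=z} ∩ Tᶜ ∩ T̂ᶜ all have positive μ-measure, and conditional independence of Y and T̂ given (T, Z̃) holds within each stratum: E[Y | {Z̃=z} ∩ T ∩ T̂] = E[Y | {Z̃=z} ∩ T ∩ T̂ᶜ] = E[Y | {Z̃=z} ∩ T] and E[Y | {Z̃=z} ∩ Tᶜ ∩ T̂] = E[Y | {Z̃=z} ∩ Tᶜ ∩ T̂ᶜ] = E[Y | {Z̃=z} ∩ Tᶜ]. Define ε₀(z) := P(Tᶜ | {Z̃=z} ∩ T̂), ε₁(z) := P(T | {Z̃=z} ∩ T̂ᶜ), ψ_proxy :=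 ∑_{z : μ(Z̃=z)>0} μ(Z̃=z) · ( E[Y | {Z̃=z} ∩ T̂] − E[Y | {Z̃=z} ∩ T̂ᶜ] ), and ψ_rea := ∑_{z : μ(Z̃=z)>0} μ(Z̃=z) · ( E[Y | {Z̃=z} ∩ T] − E[Y | {Z̃=z} ∩ Tᶜ] ). Then ψ_proxy = ψ_rea − ∑_{z : μ(Z̃=z)>0} μ(Z̃=z) · ( E[Y | {Z̃=z} ∩ T] − E[Y | {Z̃=z} ∩ Tᶜ] ) · ( ε₀(z) + ε₁(z) ). -/
open MeasureTheory
open scoped Classical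

lemma cexp_decomp {Ω : Type*} [Fintype Ω] [MeasurableSpace Ω]
    [MeasurableSingletonClass Ω]
    (μ : Measure Ω) [IsProbabilityMeasure μ] (Y : Ω → ℝ) (S B : Set Ω)
    (h1 : 0 < μ (S ∩ B)) (h2 : 0 < μ (S ∩ Bᶜ)) :
    cexp μ Y S = cprob μ S B * cexp μ Y (S ∩ B) + cprob μ S Bᶜ * cexp μ Y (S ∩ Bᶜ) := by
  have hBm : MeasurableSet B := (Set.toFinite B).measurableSet
  have hSeq : μ (S ∩ B) + μ (S ∩ Bᶜ) = μ S := by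
    rw [← Set.diff_eq]; exact measure_inter_add_diff S hBm
  have ha := measure_ne_top μ (S ∩ B)
  have hb := measure_ne_top μ (S ∩ Bᶜ)
  have hS : (μ S).toReal = (μ (S ∩ B)).toReal + (μ (S ∩ Bᶜ)).toReal := by
    rw [← ENNReal.toReal_add ha hb, hSeq]
  have hnum : (∑ ω : Ω, S.indicator (fun ω => (μ {ω}).toReal * Y ω) ω)
      = (∑ ω : Ω, (S ∩ B).indicator (fun ω => (μ {ω}).toReal * Y ω) ω)
      + (∑ ω : Ω, (S ∩ Bᶜ).indicator (fun ω => (μ {ω}).toReal * Y ω) ω) := by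
    rw [← Finset.sum_add_distrib]
    refine Finset.sum_congr rfl fun ω _ => ?_
    by_cases hSω : ω ∈ S
    · by_cases hBω : ω ∈ B <;> simp [Set.indicator, hSω, hBω]
    · simp [Set.indicator, hSω]
  have h1' : (μ (S ∩ B)).toReal ≠ 0 := by
    simp [ENNReal.toReal_eq_zero_iff, h1.ne', ha]
  have h2' : (μ (S ∩ Bᶜ)).toReal ≠ 0 := by
    simp [ENNReal.toReal_eq_zero_iff, h2.ne', hb]
  have hS' : (μ S).toReal ≠ 0 := by
    rw [hS]; positivity
  unfold cexp cprob
  rw [hnum, hS]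
  field_simp

lemma cprob_compl {Ω : Type*} [Fintype Ω] [MeasurableSpace Ω]
    [MeasurableSingletonClass Ω]
    (μ : Measure Ω) [IsProbabilityMeasure μ] (S B : Set Ω) (hS : 0 < μ S) :
    cprob μ S B = 1 - cprob μ S Bᶜ := by
  have hBm : MeasurableSet B := (Set.toFinite B).measurableSet
  have hSeq : μ (S ∩ B) + μ (S ∩ Bᶜ) = μ S := by
    rw [← Set.diff_eq]; exact measure_inter_add_diff S hBm
  have hS2 : (μ S).toReal = (μ (S ∩ B)).toReal + (μ (S ∩ Bᶜ)).toReal := by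
    rw [← ENNReal.toReal_add (measure_ne_top _ _) (measure_ne_top _ _), hSeq]
  have hS' : (μ S).toReal ≠ 0 := by
    simp [ENNReal.toReal_eq_zero_iff, hS.ne', measure_ne_top μ S]
  unfold cprob
  rw [eq_sub_iff_add_eq, ← add_div, ← hS2, div_self hS']

/-- Theorem 2 of the paper: the proxy-based estimand `ψ_proxy` equals the true
estimand `ψ_rea` minus a bias term determined by the stratum-wise misclassification
probabilities `ε₀(z) = P(Tᶜ | Z̃=z, T̂)` and `ε₁(z) = P(T | Z̃=z, T̂ᶜ)`. -/
theorem proxy_attenuation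
    {Ω 𝒵 : Type*} [Fintype Ω] [Fintype 𝒵]
    [MeasurableSpace Ω] [MeasurableSingletonClass Ω]
    (μ : Measure Ω) [IsProbabilityMeasure μ]
    (Y : Ω → ℝ) (Z : Ω → 𝒵) (T That : Set Ω)
    (hpos : ∀ z : 𝒵, 0 < μ {ω | Z ω = z} →
      0 < μ ({ω | Z ω = z} ∩ T ∩ That) ∧
      0 < μ ({ω | Z ω = z} ∩ T ∩ Thatᶜ) ∧
      0 < μ ({ω | Z ω = z} ∩ Tᶜ ∩ That) ∧
      0 < μ ({ω | Z ω = z} ∩ Tᶜ ∩ Thatᶜ))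
    (hCI : ∀ z : 𝒵, 0 < μ {ω | Z ω = z} →
      (cexp μ Y ({ω | Z ω = z} ∩ T ∩ That) = cexp μ Y ({ω | Z ω = z} ∩ T ∩ Thatᶜ) ∧
        cexp μ Y ({ω | Z ω = z} ∩ T ∩ Thatᶜ) = cexp μ Y ({ω | Z ω = z} ∩ T)) ∧
      (cexp μ Y ({ω | Z ω = z} ∩ Tᶜ ∩ That) = cexp μ Y ({ω | Z ω = z} ∩ Tᶜ ∩ Thatᶜ) ∧
        cexp μ Y ({ω | Z ω = z} ∩ Tᶜ ∩ Thatᶜ) = cexp μ Y ({ω | Z ω = z} ∩ Tᶜ)))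
    (ε₀ ε₁ : 𝒵 → ℝ)
    (hε₀ : ∀ z, ε₀ z = cprob μ ({ω | Z ω = z} ∩ That) Tᶜ)
    (hε₁ : ∀ z, ε₁ z = cprob μ ({ω | Z ω = z} ∩ Thatᶜ) T)
    (ψproxy ψrea : ℝ)
    (hproxy : ψproxy = ∑ z ∈ Finset.univ.filter (fun z : 𝒵 => 0 < μ {ω | Z ω = z}),
      (μ {ω | Z ω = z}).toReal *
        (cexp μ Y ({ω | Z ω = z} ∩ That) - cexp μ Y ({ω | Z ω = z} ∩ Thatᶜ)))
    (hrea : ψrea = ∑ z ∈ Finset.univ.filter (fun z : 𝒵 => 0 < μ {ω | Z ω = z}),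
      (μ {ω | Z ω = z}).toReal *
        (cexp μ Y ({ω | Z ω = z} ∩ T) - cexp μ Y ({ω | Z ω = z} ∩ Tᶜ))) :
    ψproxy = ψrea -
      ∑ z ∈ Finset.univ.filter (fun z : 𝒵 => 0 < μ {ω | Z ω = z}),
        (μ {ω | Z ω = z}).toReal *
          (cexp μ Y ({ω | Z ω = z} ∩ T) - cexp μ Y ({ω | Z ω = z} ∩ Tᶜ)) *
            (ε₀ z + ε₁ z) := by
  have key : ∀ z ∈ Finset.univ.filter (fun z : 𝒵 => 0 < μ {ω | Z ω = z}),
      (μ {ω | Z ω = z}).toReal *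
        (cexp μ Y ({ω | Z ω = z} ∩ That) - cexp μ Y ({ω | Z ω = z} ∩ Thatᶜ))
      = (μ {ω | Z ω = z}).toReal *
          (cexp μ Y ({ω | Z ω = z} ∩ T) - cexp μ Y ({ω | Z ω = z} ∩ Tᶜ))
        - (μ {ω | Z ω = z}).toReal *
            (cexp μ Y ({ω | Z ω = z} ∩ T) - cexp μ Y ({ω | Z ω = z} ∩ Tᶜ)) *
              (ε₀ z + ε₁ z) := by
    intro z hz
    rw [Finset.mem_filter] at hz
    have hz := hz.2
    set A := {ω | Z ω = z} with hA
    obtain ⟨p1, p2, p3, p4⟩ := hpos z hz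
    obtain ⟨⟨c1, c2⟩, ⟨c3, c4⟩⟩ := hCI z hz
    have e11 : A ∩ That ∩ T = A ∩ T ∩ That := by
      rw [Set.inter_right_comm]
    have e12 : A ∩ That ∩ Tᶜ = A ∩ Tᶜ ∩ That := by
      rw [Set.inter_right_comm]
    have e21 : A ∩ Thatᶜ ∩ T = A ∩ T ∩ Thatᶜ := by
      rw [Set.inter_right_comm]
    have e22 : A ∩ Thatᶜ ∩ Tᶜ = A ∩ Tᶜ ∩ Thatᶜ := by
      rw [Set.inter_right_comm]
    have d1 : cexp μ Y (A ∩ That)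
        = cprob μ (A ∩ That) T * cexp μ Y (A ∩ T ∩ That)
          + cprob μ (A ∩ That) Tᶜ * cexp μ Y (A ∩ Tᶜ ∩ That) := by
      have := cexp_decomp μ Y (A ∩ That) T (by rwa [e11]) (by rwa [e12])
      rwa [e11, e12] at this
    have d2 : cexp μ Y (A ∩ Thatᶜ)
        = cprob μ (A ∩ Thatᶜ) T * cexp μ Y (A ∩ T ∩ Thatᶜ)
          + cprob μ (A ∩ Thatᶜ) Tᶜ * cexp μ Y (A ∩ Tᶜ ∩ Thatᶜ) := by
      have := cexp_decomp μ Y (A ∩ Thatᶜ) T (by rwa [e21]) (by rwa [e22])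
      rwa [e21, e22] at this
    have hApos : 0 < μ (A ∩ That) :=
      lt_of_lt_of_le p1 (measure_mono (by rw [← e11]; exact Set.inter_subset_left))
    have hApos' : 0 < μ (A ∩ Thatᶜ) :=
      lt_of_lt_of_le p2 (measure_mono (by rw [← e21]; exact Set.inter_subset_left))
    have q1 : cprob μ (A ∩ That) T = 1 - ε₀ z := by
      rw [cprob_compl μ _ T hApos, hε₀]
    have q2 : cprob μ (A ∩ Thatᶜ) Tᶜ = 1 - ε₁ z := by
      have := cprob_compl μ (A ∩ Thatᶜ) Tᶜ hApos'
      rwa [compl_compl, ← hε₁] at this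
    rw [c1.trans c2, c3.trans c4] at d1
    rw [c2, c4] at d2
    rw [q1, ← hε₀ z] at d1
    rw [q2, ← hε₁ z] at d2
    rw [d1, d2]; ring
  rw [hproxy, hrea, Finset.sum_congr rfl key, Finset.sum_sub_distrib]
end

section
/- Under the hypotheses of the stratified attenuation theorem — μ a probability measure on a finite type Ω, Y : Ω → ℝ, Z̃ : Ω → 𝒵 (𝒵 finite), events T, T̂ ⊆ Ω with, for every z with μ(Z̃ = z) > 0, all four events {Z̃=z} ∩ T^{±} ∩ T̂^{±} of positive measure and E[Y | {Z̃=z} ∩ T ∩ T̂] = E[Y | {Z̃=z} ∩ T ∩ T̂ᶜ] = E[Y | {Z̃=z} ∩ T], E[Y | {Z̃=z} ∩ Tᶜ ∩ T̂] = E[Y | {Z̃=z} ∩ Tᶜ ∩ T̂ᶜ] = E[Y | {Z̃=z} ∩ Tᶜ] — assume moreover that for every z with μ(Z̃=z) > 0: (i) the effect sign is homogeneous, E[Y | {Z̃=z} ∩ T] ≥ E[Y | {Z̃=z} ∩ Tᶜ], and (ii) the proxy is better than chance, P(Tᶜ | {Z̃=z} ∩ T̂) + P(T | {Z̃=z} ∩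 T̂ᶜ) ≤ 1. Then 0 ≤ ψ_proxy ≤ ψ_rea, where ψ_proxy := ∑_{z : μ(Z̃=z)>0} μ(Z̃=z) · ( E[Y | {Z̃=z} ∩ T̂] − E[Y | {Z̃=z} ∩ T̂ᶜ] ) and ψ_rea := ∑_{z : μ(Z̃=z)>0} μ(Z̃=z) · ( E[Y | {Z̃=z} ∩ T] − E[Y | {Z̃=z} ∩ Tᶜ] ). -/
open MeasureTheory
open scoped Classical

/-- Mixing lemma: a conditional expectation decomposes along a further partition. -/
lemma cexp_mix {Ω : Type*} [Fintype Ω] [MeasurableSpace Ω] [MeasurableSingletonClass Ω]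
    (μ : Measure Ω) [IsFiniteMeasure μ] (Y : Ω → ℝ) (B C : Set Ω)
    (h1 : 0 < μ (B ∩ C)) (h2 : 0 < μ (B ∩ Cᶜ)) :
    cexp μ Y B = ((μ (B ∩ C)).toReal / (μ B).toReal) * cexp μ Y (B ∩ C)
      + ((μ (B ∩ Cᶜ)).toReal / (μ B).toReal) * cexp μ Y (B ∩ Cᶜ) := by
  have hmeas : MeasurableSet C := (Set.toFinite C).measurableSet
  have hadd : μ (B ∩ C) + μ (B ∩ Cᶜ) = μ B := by
    rw [← Set.diff_eq]; exact measure_inter_add_diff B hmeas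
  have t1 : 0 < (μ (B ∩ C)).toReal := ENNReal.toReal_pos h1.ne' (measure_ne_top _ _)
  have t2 : 0 < (μ (B ∩ Cᶜ)).toReal := ENNReal.toReal_pos h2.ne' (measure_ne_top _ _)
  have tB : (μ B).toReal = (μ (B ∩ C)).toReal + (μ (B ∩ Cᶜ)).toReal := by
    rw [← ENNReal.toReal_add (measure_ne_top _ _) (measure_ne_top _ _), hadd]
  have hS : (∑ ω : Ω, B.indicator (fun ω => (μ {ω}).toReal * Y ω) ω)
      = (∑ ω : Ω, (B ∩ C).indicator (fun ω => (μ {ω}).toReal * Y ω) ω)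
        + (∑ ω : Ω, (B ∩ Cᶜ).indicator (fun ω => (μ {ω}).toReal * Y ω) ω) := by
    rw [← Finset.sum_add_distrib]
    refine Finset.sum_congr rfl fun ω _ => ?_
    by_cases hb : ω ∈ B <;> by_cases hc : ω ∈ C <;>
      simp [Set.indicator, hb, hc]
  unfold cexp
  rw [hS, tB]
  field_simp

/-- Per-stratum fact: sum of complementary conditional fractions is 1. -/
lemma frac_add_one {Ω : Type*} [Fintype Ω] [MeasurableSpace Ω] [MeasurableSingletonClass Ω]
    (μ : Measure Ω) [IsFiniteMeasure μ] (B C : Set Ω)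
    (h1 : 0 < μ (B ∩ C)) (h2 : 0 < μ (B ∩ Cᶜ)) :
    (μ (B ∩ C)).toReal / (μ B).toReal + (μ (B ∩ Cᶜ)).toReal / (μ B).toReal = 1 := by
  have hmeas : MeasurableSet C := (Set.toFinite C).measurableSet
  have hadd : μ (B ∩ C) + μ (B ∩ Cᶜ) = μ B := by
    rw [← Set.diff_eq]; exact measure_inter_add_diff B hmeas
  have t1 : 0 < (μ (B ∩ C)).toReal := ENNReal.toReal_pos h1.ne' (measure_ne_top _ _)
  have t2 : 0 < (μ (B ∩ Cᶜ)).toReal := ENNReal.toReal_pos h2.ne' (measure_ne_top _ _)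
  have tB : (μ B).toReal = (μ (B ∩ C)).toReal + (μ (B ∩ Cᶜ)).toReal := by
    rw [← ENNReal.toReal_add (measure_ne_top _ _) (measure_ne_top _ _), hadd]
  rw [tB]
  field_simp

/-- Corollary of Theorem 2: under a homogeneous effect sign and a better-than-chance
proxy in every stratum of `Z̃`, the proxy-based estimand satisfies
`0 ≤ ψ_proxy ≤ ψ_rea` — the bias is benign. -/
theorem proxy_benign_bias
    {Ω 𝒵 : Type*} [Fintype Ω] [Fintype 𝒵]
    [MeasurableSpace Ω] [MeasurableSingletonClass Ω]
    (μ : Measure Ω) [IsProbabilityMeasure μ]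
    (Y : Ω → ℝ) (Z : Ω → 𝒵) (T That : Set Ω)
    (hpos : ∀ z : 𝒵, 0 < μ {ω | Z ω = z} →
      0 < μ ({ω | Z ω = z} ∩ T ∩ That) ∧
      0 < μ ({ω | Z ω = z} ∩ T ∩ Thatᶜ) ∧
      0 < μ ({ω | Z ω = z} ∩ Tᶜ ∩ That) ∧
      0 < μ ({ω | Z ω = z} ∩ Tᶜ ∩ Thatᶜ))
    (hCI : ∀ z : 𝒵, 0 < μ {ω | Z ω = z} →
      (cexp μ Y ({ω | Z ω = z} ∩ T ∩ That) = cexp μ Y ({ω | Z ω = z} ∩ T ∩ Thatᶜ) ∧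
        cexp μ Y ({ω | Z ω = z} ∩ T ∩ Thatᶜ) = cexp μ Y ({ω | Z ω = z} ∩ T)) ∧
      (cexp μ Y ({ω | Z ω = z} ∩ Tᶜ ∩ That) = cexp μ Y ({ω | Z ω = z} ∩ Tᶜ ∩ Thatᶜ) ∧
        cexp μ Y ({ω | Z ω = z} ∩ Tᶜ ∩ Thatᶜ) = cexp μ Y ({ω | Z ω = z} ∩ Tᶜ)))
    (hsign : ∀ z : 𝒵, 0 < μ {ω | Z ω = z} →
      cexp μ Y ({ω | Z ω = z} ∩ Tᶜ) ≤ cexp μ Y ({ω | Z ω = z} ∩ T))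
    (hchance : ∀ z : 𝒵, 0 < μ {ω | Z ω = z} →
      cprob μ ({ω | Z ω = z} ∩ That) Tᶜ + cprob μ ({ω | Z ω = z} ∩ Thatᶜ) T ≤ 1)
    (ψproxy ψrea : ℝ)
    (hproxy : ψproxy = ∑ z ∈ Finset.univ.filter (fun z : 𝒵 => 0 < μ {ω | Z ω = z}),
      (μ {ω | Z ω = z}).toReal *
        (cexp μ Y ({ω | Z ω = z} ∩ That) - cexp μ Y ({ω | Z ω = z} ∩ Thatᶜ)))
    (hrea : ψrea = ∑ z ∈ Finset.univ.filter (fun z : 𝒵 => 0 < μ {ω | Z ω = z}),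
      (μ {ω | Z ω = z}).toReal *
        (cexp μ Y ({ω | Z ω = z} ∩ T) - cexp μ Y ({ω | Z ω = z} ∩ Tᶜ))) :
    0 ≤ ψproxy ∧ ψproxy ≤ ψrea := by
  -- Per-stratum bounds
  have key : ∀ z ∈ Finset.univ.filter (fun z : 𝒵 => 0 < μ {ω | Z ω = z}),
      0 ≤ cexp μ Y ({ω | Z ω = z} ∩ That) - cexp μ Y ({ω | Z ω = z} ∩ Thatᶜ) ∧
      cexp μ Y ({ω | Z ω = z} ∩ That) - cexp μ Y ({ω | Z ω = z} ∩ Thatᶜ) ≤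
        cexp μ Y ({ω | Z ω = z} ∩ T) - cexp μ Y ({ω | Z ω = z} ∩ Tᶜ) := by
    intro z hz
    rw [Finset.mem_filter] at hz
    have hz' := hz.2
    set A := {ω | Z ω = z} with hA
    obtain ⟨p1, p2, p3, p4⟩ := hpos z hz'
    obtain ⟨⟨e1, e2⟩, ⟨e3, e4⟩⟩ := hCI z hz'
    have hs := hsign z hz'
    have hc := hchance z hz'
    -- positivity of the partition pieces of A ∩ That and A ∩ Thatᶜ
    have q1 : 0 < μ ((A ∩ That) ∩ T) := by rwa [Set.inter_right_comm] at p1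
    have q2 : 0 < μ ((A ∩ That) ∩ Tᶜ) := by rwa [Set.inter_right_comm] at p3
    have q3 : 0 < μ ((A ∩ Thatᶜ) ∩ T) := by rwa [Set.inter_right_comm] at p2
    have q4 : 0 < μ ((A ∩ Thatᶜ) ∩ Tᶜ) := by rwa [Set.inter_right_comm] at p4
    -- mixtures
    have m1 := cexp_mix μ Y (A ∩ That) T q1 q2
    have m2 := cexp_mix μ Y (A ∩ Thatᶜ) T q3 q4
    have f1 := frac_add_one μ (A ∩ That) T q1 q2
    have f2 := frac_add_one μ (A ∩ Thatᶜ) T q3 q4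
    -- rewrite conditional expectations of the pieces
    have r1 : cexp μ Y ((A ∩ That) ∩ T) = cexp μ Y (A ∩ T) := by
      rw [Set.inter_right_comm]; rw [e1, e2]
    have r2 : cexp μ Y ((A ∩ That) ∩ Tᶜ) = cexp μ Y (A ∩ Tᶜ) := by
      rw [Set.inter_right_comm]; rw [e3, e4]
    have r3 : cexp μ Y ((A ∩ Thatᶜ) ∩ T) = cexp μ Y (A ∩ T) := by
      rw [Set.inter_right_comm]; rw [e2]
    have r4 : cexp μ Y ((A ∩ Thatᶜ) ∩ Tᶜ) = cexp μ Y (A ∩ Tᶜ) := by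
      rw [Set.inter_right_comm]; rw [e4]
    rw [r1, r2] at m1
    rw [r3, r4] at m2
    -- name the fractions
    set a := cexp μ Y (A ∩ T)
    set b := cexp μ Y (A ∩ Tᶜ)
    set s1 : ℝ := (μ ((A ∩ That) ∩ Tᶜ)).toReal / (μ (A ∩ That)).toReal with hs1
    set u1 : ℝ := (μ ((A ∩ That) ∩ T)).toReal / (μ (A ∩ That)).toReal with hu1
    set s2 : ℝ := (μ ((A ∩ Thatᶜ) ∩ T)).toReal / (μ (A ∩ Thatᶜ)).toReal with hs2
    set u2 : ℝ := (μ ((A ∩ Thatᶜ) ∩ Tᶜ)).toReal / (μ (A ∩ Thatᶜ)).toReal with hu2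
    have hcprob1 : cprob μ (A ∩ That) Tᶜ = s1 := rfl
    have hcprob2 : cprob μ (A ∩ Thatᶜ) T = s2 := rfl
    rw [hcprob1, hcprob2] at hc
    have hs1nn : 0 ≤ s1 := by positivity
    have hs2nn : 0 ≤ s2 := by positivity
    have hu1nn : 0 ≤ u1 := by positivity
    have hu2nn : 0 ≤ u2 := by positivity
    -- m1 : cexp (A ∩ That) = u1 * a + s1 * b ; f1 : u1 + s1 = 1
    -- m2 : cexp (A ∩ Thatᶜ) = s2 * a + u2 * b ; f2 : s2 + u2 = 1
    have hu1' : u1 = 1 - s1 := by linarith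
    have hu2' : u2 = 1 - s2 := by linarith
    rw [m1, m2, hu1', hu2']
    have key0 : (1 - s1) * a + s1 * b - (s2 * a + (1 - s2) * b)
        = (1 - s1 - s2) * (a - b) := by ring
    constructor
    · rw [key0]
      exact mul_nonneg (by linarith) (by linarith)
    · have h2 : 0 ≤ (s1 + s2) * (a - b) :=
        mul_nonneg (add_nonneg hs1nn hs2nn) (by linarith)
      nlinarith [key0, h2]
  constructor
  · rw [hproxy]
    refine Finset.sum_nonneg fun z hz => ?_
    exact mul_nonneg ENNReal.toReal_nonneg (key z hz).1
  · rw [hproxy, hrea]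
    refine Finset.sum_le_sum fun z hz => ?_
    exact mul_le_mul_of_nonneg_left (key z hz).2 ENNReal.toReal_nonneg
end

section
/- Let μ be a probability measure on a finite type Ω, Y : Ω → ℝ, W : Ω → 𝒲 (𝒲 finite), and let T, T̂ ⊆ Ω be events with μ(T̂) > 0 and μ(T̂ᶜ) > 0. Suppose for every w with μ(W = w) > 0 the four events {W=w} ∩ T ∩ T̂, {W=w} ∩ T ∩ T̂ᶜ, {W=w} ∩ Tᶜ ∩ T̂, {W=w} ∩ Tᶜ ∩ T̂ᶜ all have positive μ-measure, and conditional independence of Y and T̂ given (W, T) holds: E[Y | {W=w} ∩ T ∩ T̂] = E[Y | {W=w} ∩ T ∩ T̂ᶜ] = E[Y | {W=w} ∩ T] and E[Y | {W=w} ∩ Tᶜ ∩ T̂] = E[Y | {W=w} ∩ Tᶜ ∩ T̂ᶜ] = E[Y | {W=w} ∩ Tᶜ]. Then E[Y | T̂] − E[Y | T̂ᶜ] = ∑_{w : μ(W=w)>0} μ(W=w) · ( E[Y | {W=w} ∩ T] · α(w) − E[Y | {W=w} ∩ Tᶜ] · β(w) ), where α(w) := P(T ∩ T̂ | W=w)/μ(T̂)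 − P(T ∩ T̂ᶜ | W=w)/μ(T̂ᶜ) and β(w) := P(Tᶜ ∩ T̂ᶜ | W=w)/μ(T̂ᶜ) − P(Tᶜ ∩ T̂ | W=w)/μ(T̂). -/
open MeasureTheory
open scoped Classical

/-- Theorem 3 of the paper (Appendix F): the naive estimand `E[Y | T̂] − E[Y | T̂ᶜ]`,
which does not adjust for the text `W`, equals a weighted contrast whose weights
`α(w)`, `β(w)` depend on the error of the proxy. -/
theorem naive_estimand_bias
    {Ω 𝒲 : Type*} [Fintype Ω] [Fintype 𝒲]
    [MeasurableSpace Ω] [MeasurableSingletonClass Ω]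
    (μ : Measure Ω) [IsProbabilityMeasure μ]
    (Y : Ω → ℝ) (W : Ω → 𝒲) (T That : Set Ω)
    (hThat : 0 < μ That) (hThatc : 0 < μ Thatᶜ)
    (hpos : ∀ w : 𝒲, 0 < μ {ω | W ω = w} →
      0 < μ ({ω | W ω = w} ∩ T ∩ That) ∧
      0 < μ ({ω | W ω = w} ∩ T ∩ Thatᶜ) ∧
      0 < μ ({ω | W ω = w} ∩ Tᶜ ∩ That) ∧
      0 < μ ({ω | W ω = w} ∩ Tᶜ ∩ Thatᶜ))
    (hCI : ∀ w : 𝒲, 0 < μ {ω | W ω = w} →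
      (cexp μ Y ({ω | W ω = w} ∩ T ∩ That) = cexp μ Y ({ω | W ω = w} ∩ T ∩ Thatᶜ) ∧
        cexp μ Y ({ω | W ω = w} ∩ T ∩ Thatᶜ) = cexp μ Y ({ω | W ω = w} ∩ T)) ∧
      (cexp μ Y ({ω | W ω = w} ∩ Tᶜ ∩ That) = cexp μ Y ({ω | W ω = w} ∩ Tᶜ ∩ Thatᶜ) ∧
        cexp μ Y ({ω | W ω = w} ∩ Tᶜ ∩ Thatᶜ) = cexp μ Y ({ω | W ω = w} ∩ Tᶜ)))
    (α β : 𝒲 → ℝ)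
    (hα : ∀ w, α w = cprob μ {ω | W ω = w} (T ∩ That) / (μ That).toReal -
      cprob μ {ω | W ω = w} (T ∩ Thatᶜ) / (μ Thatᶜ).toReal)
    (hβ : ∀ w, β w = cprob μ {ω | W ω = w} (Tᶜ ∩ Thatᶜ) / (μ Thatᶜ).toReal -
      cprob μ {ω | W ω = w} (Tᶜ ∩ That) / (μ That).toReal) :
    cexp μ Y That - cexp μ Y Thatᶜ =
      ∑ w ∈ Finset.univ.filter (fun w : 𝒲 => 0 < μ {ω | W ω = w}),
        (μ {ω | W ω = w}).toReal *
          (cexp μ Y ({ω | W ω = w} ∩ T) * α w -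
            cexp μ Y ({ω | W ω = w} ∩ Tᶜ) * β w) := by
  classical
  set f : Ω → ℝ := fun ω => (μ {ω}).toReal * Y ω with hf
  have hm0 : ∀ A : Set Ω, 0 < μ A → (μ A).toReal ≠ 0 := fun A hA =>
    (ENNReal.toReal_pos hA.ne' (measure_ne_top μ A)).ne'
  have hS0 : ∀ A : Set Ω, μ A = 0 → (∑ ω : Ω, A.indicator f ω) = 0 := by
    intro A hA
    refine Finset.sum_eq_zero fun ω _ => ?_
    by_cases h : ω ∈ A
    · have h0 : μ {ω} = 0 :=
        le_antisymm (hA ▸ measure_mono (Set.singleton_subset_iff.2 h)) zero_le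
      simp [Set.indicator_of_mem h, hf, h0]
    · simp [Set.indicator_of_notMem h]
  have hScexp : ∀ A : Set Ω, 0 < μ A →
      (∑ ω : Ω, A.indicator f ω) = cexp μ Y A * (μ A).toReal := by
    intro A hA
    rw [cexp, div_mul_cancel₀]
    exact hm0 A hA
  have hdecomp : ∀ B : Set Ω, (∑ ω : Ω, B.indicator f ω) =
      ∑ w ∈ Finset.univ.filter (fun w : 𝒲 => 0 < μ {ω | W ω = w}),
        ((∑ ω : Ω, ({ω | W ω = w} ∩ T ∩ B).indicator f ω) +
         (∑ ω : Ω, ({ω | W ω = w} ∩ Tᶜ ∩ B).indicator f ω)) := by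
    intro B
    have h1 : (∑ ω : Ω, B.indicator f ω) =
        ∑ w : 𝒲, ∑ ω : Ω, ({ω | W ω = w} ∩ B).indicator f ω := by
      rw [Finset.sum_comm]
      refine Finset.sum_congr rfl fun ω _ => ?_
      rw [Finset.sum_eq_single (W ω)]
      · by_cases h : ω ∈ B <;> simp [Set.indicator, h]
      · intro w _ hw
        apply Set.indicator_of_notMem
        simp [Ne.symm hw]
      · simp
    have h2 : ∀ w : 𝒲, (∑ ω : Ω, ({ω | W ω = w} ∩ B).indicator f ω) =
        (∑ ω : Ω, ({ω | W ω = w} ∩ T ∩ B).indicator f ω) +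
        (∑ ω : Ω, ({ω | W ω = w} ∩ Tᶜ ∩ B).indicator f ω) := by
      intro w
      rw [← Finset.sum_add_distrib]
      refine Finset.sum_congr rfl fun ω _ => ?_
      by_cases hw : W ω = w <;> by_cases ht : ω ∈ T <;> by_cases hb : ω ∈ B <;>
        simp [Set.indicator, hw, ht, hb]
    rw [h1]
    rw [← Finset.sum_filter_add_sum_filter_not Finset.univ
      (fun w : 𝒲 => 0 < μ {ω | W ω = w})]
    have h3 : ∑ w ∈ Finset.univ.filter (fun w : 𝒲 => ¬ 0 < μ {ω | W ω = w}),
        (∑ ω : Ω, ({ω | W ω = w} ∩ B).indicator f ω) = 0 := by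
      refine Finset.sum_eq_zero fun w hw => ?_
      simp only [Finset.mem_filter] at hw
      have h0 : μ {ω | W ω = w} = 0 := by
        by_contra h
        exact hw.2 (lt_of_le_of_ne zero_le (Ne.symm h))
      exact hS0 _ (le_antisymm (h0 ▸ measure_mono Set.inter_subset_left) zero_le)
    rw [h3, add_zero]
    exact Finset.sum_congr rfl fun w _ => h2 w
  have key : ∀ B : Set Ω,
      (∀ w : 𝒲, 0 < μ {ω | W ω = w} →
        0 < μ ({ω | W ω = w} ∩ T ∩ B) ∧ 0 < μ ({ω | W ω = w} ∩ Tᶜ ∩ B)) →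
      (∀ w : 𝒲, 0 < μ {ω | W ω = w} →
        cexp μ Y ({ω | W ω = w} ∩ T ∩ B) = cexp μ Y ({ω | W ω = w} ∩ T) ∧
        cexp μ Y ({ω | W ω = w} ∩ Tᶜ ∩ B) = cexp μ Y ({ω | W ω = w} ∩ Tᶜ)) →
      cexp μ Y B = ∑ w ∈ Finset.univ.filter (fun w : 𝒲 => 0 < μ {ω | W ω = w}),
        (cexp μ Y ({ω | W ω = w} ∩ T) * (μ ({ω | W ω = w} ∩ T ∩ B)).toReal +
         cexp μ Y ({ω | W ω = w} ∩ Tᶜ) * (μ ({ω | W ω = w} ∩ Tᶜ ∩ B)).toReal)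
        / (μ B).toReal := by
    intro B hBpos hBci
    rw [cexp, hdecomp B, Finset.sum_div]
    refine Finset.sum_congr rfl fun w hw => ?_
    simp only [Finset.mem_filter] at hw
    obtain ⟨hp1, hp2⟩ := hBpos w hw.2
    obtain ⟨hc1, hc2⟩ := hBci w hw.2
    rw [hScexp _ hp1, hScexp _ hp2, hc1, hc2]
  have hT1 : cexp μ Y That = ∑ w ∈ Finset.univ.filter (fun w : 𝒲 => 0 < μ {ω | W ω = w}),
      (cexp μ Y ({ω | W ω = w} ∩ T) * (μ ({ω | W ω = w} ∩ T ∩ That)).toReal +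
       cexp μ Y ({ω | W ω = w} ∩ Tᶜ) * (μ ({ω | W ω = w} ∩ Tᶜ ∩ That)).toReal)
      / (μ That).toReal := by
    refine key That (fun w hw => ⟨(hpos w hw).1, (hpos w hw).2.2.1⟩) (fun w hw => ?_)
    obtain ⟨⟨hc1, hc2⟩, ⟨hc3, hc4⟩⟩ := hCI w hw
    exact ⟨hc1.trans hc2, hc3.trans hc4⟩
  have hT2 : cexp μ Y Thatᶜ = ∑ w ∈ Finset.univ.filter (fun w : 𝒲 => 0 < μ {ω | W ω = w}),
      (cexp μ Y ({ω | W ω = w} ∩ T) * (μ ({ω | W ω = w} ∩ T ∩ Thatᶜ)).toReal +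
       cexp μ Y ({ω | W ω = w} ∩ Tᶜ) * (μ ({ω | W ω = w} ∩ Tᶜ ∩ Thatᶜ)).toReal)
      / (μ Thatᶜ).toReal := by
    refine key Thatᶜ (fun w hw => ⟨(hpos w hw).2.1, (hpos w hw).2.2.2⟩) (fun w hw => ?_)
    obtain ⟨⟨hc1, hc2⟩, ⟨hc3, hc4⟩⟩ := hCI w hw
    exact ⟨hc2, hc4⟩
  rw [hT1, hT2, ← Finset.sum_sub_distrib]
  refine Finset.sum_congr rfl fun w hw => ?_
  simp only [Finset.mem_filter] at hw
  have hwne : (μ {ω | W ω = w}).toReal ≠ 0 := hm0 _ hw.2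
  have hTne : (μ That).toReal ≠ 0 := hm0 _ hThat
  have hTcne : (μ Thatᶜ).toReal ≠ 0 := hm0 _ hThatc
  rw [hα w, hβ w, cprob, cprob, cprob, cprob,
    ← Set.inter_assoc, ← Set.inter_assoc, ← Set.inter_assoc, ← Set.inter_assoc]
  field_simp
  ring
end
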